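/- Let x and y be rational numbers with 0 < x < 1 and -x < y < 0, and set q = (x-1)(y-1) and γ = y-1. Then for every matroid M on a finite ground set E with no loops, (-1)^{r(E)} · Z̃(M;q,γ) > 0, where r is the rank function of M. -/

import Mathlib

/-- A matroid on a finite ground set `E`, presented by its rank function. -/
structure RankMatroid (α : Type) [DecidableEq α] where
  /-- the ground set -/
  E : Finset α
  /-- the rank function -/
  r : Finset α → ℕ
  rank_le_card : ∀ A, A ⊆ E → r A ≤ A.card
  rank_mono : ∀ A B, A ⊆ B → B ⊆ E → r A ≤ r B
  rank_submodular : ∀ A B, A ⊆ E → B ⊆ E → r (A ∪ B) + r (A ∩ B) ≤ r A + r B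


/-- The matroid Tutte polynomial with constant edge weight `γ`:
`Z̃(M;q,γ) = Σ_{A⊆E} q^{-r(A)} γ^{|A|}`. -/
noncomputable def Ztc {α : Type} [DecidableEq α] (M : RankMatroid α) (q γ : ℚ) : ℚ :=
  ∑ A ∈ M.E.powerset, q ^ (-(M.r A : ℤ)) * γ ^ A.card

/-- A loop of a matroid: an element of the ground set of rank `0`. -/
def RankMatroid.IsLoop {α : Type} [DecidableEq α] (M : RankMatroid α) (e : α) : Prop :=
  e ∈ M.E ∧ M.r {e} = 0

/-!
Extend `Z̃` to the multivariate polynomial `Z(M; q, v) = Σ_A q^{-r(A)} ∏_{e ∈ A} v_e` and prove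
`(-1)^{r(E)} Z(M; q, v) > 0` for loopless `M` whenever `q > 0` and every weight lies in a set `P`
with `q + a < 0` on `P` that is closed under the parallel-merge rule `a, b ↦ a + b + ab`.
Induct on `|E|`. If contracting some `e` creates a loop `f`, then `e, f` are parallel and may be
merged into a single element of weight `v_e + v_f + v_e v_f`. Otherwise `M/e` and `M \ e` are
loopless, and deletion–contraction `Z(M) = Z(M \ e) + v_e q⁻¹ Z(M/e)` adds two terms of the right
sign; if `e` is a coloop the two minors have equal `Z` and the sign comes from `1 + v_e/q < 0`.
For `q = (x-1)(y-1)` and `γ = y - 1` take `P = {a | y ≤ 1 + a ≤ y²}`, which is closed under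
multiplication of `1 + a` since `|y| < 1`.
-/

open Finset

lemma mul_mem_Icc_sq_of_mem_Icc_sq {R : Type*} [CommRing R] [LinearOrder R] [IsStrictOrderedRing R]
    {y u w : R} (hy1 : -1 ≤ y) (hy0 : y ≤ 0) (hu : u ∈ Set.Icc y (y ^ 2))
    (hw : w ∈ Set.Icc y (y ^ 2)) : u * w ∈ Set.Icc y (y ^ 2) := by
  have hsq : y ^ 2 ≤ -y := by nlinarith
  have hu' : |u| ≤ -y := abs_le.mpr ⟨by linarith [hu.1], by linarith [hu.2]⟩
  have hw' : |w| ≤ -y := abs_le.mpr ⟨by linarith [hw.1], by linarith [hw.2]⟩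
  have huw : |u * w| ≤ y ^ 2 := by
    rw [abs_mul, sq, ← neg_mul_neg y y]
    exact mul_le_mul hu' hw' (abs_nonneg w) (by linarith)
  exact ⟨by linarith [(abs_le.mp huw).1], (abs_le.mp huw).2⟩

namespace RankMatroid

variable {α : Type} [DecidableEq α] (M : RankMatroid α)

lemma rank_empty : M.r ∅ = 0 := by
  simpa using M.rank_le_card ∅ (empty_subset _)

lemma rank_union_le {A B : Finset α} (hA : A ⊆ M.E) (hB : B ⊆ M.E) :
    M.r (A ∪ B) ≤ M.r A + M.r B :=
  (Nat.le_add_right _ _).trans (M.rank_submodular A B hA hB)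

lemma rank_singleton_eq_one {e : α} (he : e ∈ M.E) (hloop : ¬ M.IsLoop e) : M.r {e} = 1 := by
  have hle := M.rank_le_card {e} (singleton_subset_iff.mpr he)
  have hne : M.r {e} ≠ 0 := fun h => hloop ⟨he, h⟩
  rw [card_singleton] at hle
  omega

lemma rank_insert_eq_of_rank_pair_eq {e f : α} {A : Finset α} (hA : A ⊆ M.E) (heA : e ∈ A)
    (hf : f ∈ M.E) (hp : M.r {e, f} = M.r {e}) : M.r (insert f A) = M.r A := by
  have hsub := M.rank_submodular A {e, f} hA (insert_subset (hA heA) (singleton_subset_iff.mpr hf))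
  have hunion : A ∪ {e, f} = insert f A := by
    rw [union_insert, insert_eq_of_mem (mem_union_left _ heA), union_singleton]
  have hinter : M.r {e} ≤ M.r (A ∩ {e, f}) :=
    M.rank_mono _ _ (by simp [heA]) (inter_subset_left.trans hA)
  have hmono := M.rank_mono A (insert f A) (subset_insert _ _) (insert_subset hf hA)
  rw [hunion] at hsub
  omega

lemma rank_erase_eq_of_rank_pair_eq {e f : α} (he : e ∈ M.E.erase f) (hf : f ∈ M.E)
    (hp : M.r {e, f} = M.r {e}) : M.r (M.E.erase f) = M.r M.E := by
  conv_rhs => rw [← insert_erase hf]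
  exact (M.rank_insert_eq_of_rank_pair_eq (erase_subset f M.E) he hf hp).symm

lemma rank_insert_of_coloop {e : α} (he : e ∈ M.E) (hco : M.r (M.E.erase e) < M.r M.E)
    {A : Finset α} (hA : A ⊆ M.E.erase e) : M.r (insert e A) = M.r A + 1 := by
  have hAE : A ⊆ M.E := hA.trans (erase_subset e M.E)
  have hle := M.rank_union_le (singleton_subset_iff.mpr he) hAE
  have hsub := M.rank_submodular (insert e A) (M.E.erase e) (insert_subset he hAE)
    (erase_subset e M.E)
  have hsingle := M.rank_le_card {e} (singleton_subset_iff.mpr he)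
  rw [insert_union, union_eq_right.mpr hA, insert_erase he,
    insert_inter_of_notMem (notMem_erase e _), inter_eq_left.mpr hA] at hsub
  rw [← insert_eq] at hle
  simp only [card_singleton] at hsingle
  omega

@[simps]
def delete (e : α) : RankMatroid α where
  E := M.E.erase e
  r := M.r
  rank_le_card A hA := M.rank_le_card A (hA.trans (erase_subset e M.E))
  rank_mono A B hAB hB := M.rank_mono A B hAB (hB.trans (erase_subset e M.E))
  rank_submodular A B hA hB :=
    M.rank_submodular A B (hA.trans (erase_subset e M.E)) (hB.trans (erase_subset e M.E))

lemma loopless_delete (hM : ∀ g ∈ M.E, ¬ M.IsLoop g) (e : α) :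
    ∀ g ∈ (M.delete e).E, ¬ (M.delete e).IsLoop g :=
  fun g hg hloop => hM g (mem_of_mem_erase hg) ⟨mem_of_mem_erase hg, hloop.2⟩

@[simps]
def contract {e : α} (he : e ∈ M.E) : RankMatroid α where
  E := M.E.erase e
  r A := M.r (insert e A) - M.r {e}
  rank_le_card A hA := by
    have hAE := hA.trans (erase_subset e M.E)
    have hle := M.rank_union_le (singleton_subset_iff.mpr he) hAE
    have hcard := M.rank_le_card A hAE
    rw [← insert_eq] at hle
    omega
  rank_mono A B hAB hB := Nat.sub_le_sub_right (M.rank_mono _ _ (insert_subset_insert e hAB)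
    (insert_subset he (hB.trans (erase_subset e M.E)))) _
  rank_submodular A B hA hB := by
    have hAE := hA.trans (erase_subset e M.E)
    have hBE := hB.trans (erase_subset e M.E)
    have hsub := M.rank_submodular (insert e A) (insert e B) (insert_subset he hAE)
      (insert_subset he hBE)
    rw [← insert_union_distrib, ← insert_inter_distrib] at hsub
    have hinter : M.r {e} ≤ M.r (insert e (A ∩ B)) := M.rank_mono _ _ (by simp)
      (insert_subset he (inter_subset_left.trans hAE))
    have hA' := M.rank_mono _ _ (insert_subset_insert e (inter_subset_left (s₂ := B)))
      (insert_subset he hAE)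
    have hB' := M.rank_mono _ _ (insert_subset_insert e (inter_subset_right (s₁ := A)))
      (insert_subset he hBE)
    have hU := M.rank_mono _ _ (insert_subset_insert e (subset_union_left (s₂ := B)))
      (insert_subset he (union_subset hAE hBE))
    omega

lemma rank_contract_ground {e : α} (he : e ∈ M.E) :
    (M.contract he).r (M.contract he).E = M.r M.E - M.r {e} := by
  rw [contract_r, contract_E, insert_erase he]

lemma isLoop_contract_iff {e g : α} (he : e ∈ M.E) :
    (M.contract he).IsLoop g ↔ g ∈ M.E.erase e ∧ M.r {e, g} = M.r {e} := by
  have hmono : g ∈ M.E.erase e → M.r {e} ≤ M.r {e, g} := fun hg =>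
    M.rank_mono _ _ (by simp) (insert_subset he (singleton_subset_iff.mpr (mem_of_mem_erase hg)))
  simp only [IsLoop, contract_E, contract_r]
  constructor
  · rintro ⟨hg, h⟩
    exact ⟨hg, by have := hmono hg; omega⟩
  · rintro ⟨hg, h⟩
    exact ⟨hg, by rw [h]; simp⟩

noncomputable def multivariateTutte (q : ℚ) (v : α → ℚ) : ℚ :=
  ∑ A ∈ M.E.powerset, q ^ (-(M.r A : ℤ)) * ∏ e ∈ A, v e

lemma Ztc_eq_multivariateTutte (q γ : ℚ) : Ztc M q γ = M.multivariateTutte q (fun _ => γ) := by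
  simp only [Ztc, multivariateTutte, prod_const]

lemma multivariateTutte_delete_contract {e : α} (he : e ∈ M.E) (h1 : M.r {e} = 1) {q : ℚ}
    (hq : q ≠ 0) (v : α → ℚ) :
    M.multivariateTutte q v =
      (M.delete e).multivariateTutte q v +
        v e * q⁻¹ * (M.contract he).multivariateTutte q v := by
  simp only [multivariateTutte, delete_E, delete_r, contract_E, contract_r, h1]
  conv_lhs => rw [← insert_erase he, sum_powerset_insert (notMem_erase e M.E)]
  rw [mul_sum]
  refine congrArg _ (sum_congr rfl fun A hA => ?_)
  have hAE : A ⊆ M.E.erase e := mem_powerset.mp hA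
  have heA : e ∉ A := fun h => notMem_erase e M.E (hAE h)
  have hpos : 1 ≤ M.r (insert e A) :=
    h1 ▸ M.rank_mono _ _ (by simp) (insert_subset he (hAE.trans (erase_subset e M.E)))
  rw [prod_insert heA,
    show (-(M.r (insert e A) : ℤ)) = -((M.r (insert e A) - 1 : ℕ) : ℤ) + -1 by omega,
    zpow_add₀ hq, zpow_neg_one]
  ring

lemma multivariateTutte_delete_eq_contract_of_coloop {e : α} (he : e ∈ M.E)
    (hco : M.r (M.E.erase e) < M.r M.E) (q : ℚ) (v : α → ℚ) :
    (M.delete e).multivariateTutte q v = (M.contract he).multivariateTutte q v := by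
  have h1 : M.r {e} = 1 := by
    simpa [rank_empty] using M.rank_insert_of_coloop he hco (empty_subset _)
  simp only [multivariateTutte, delete_E, delete_r, contract_E, contract_r, h1]
  exact sum_congr rfl fun A hA => by rw [M.rank_insert_of_coloop he hco (mem_powerset.mp hA),
    Nat.add_sub_cancel]

lemma multivariateTutte_merge_parallel {e f : α} (he : e ∈ M.E) (hf : f ∈ M.E) (hef : e ≠ f)
    (hpe : M.r {e, f} = M.r {e}) (hpf : M.r {e, f} = M.r {f}) (q : ℚ) (v : α → ℚ) :
    M.multivariateTutte q v =
      (M.delete f).multivariateTutte q (Function.update v e (v e + v f + v e * v f)) := by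
  set S := (M.E.erase f).erase e
  have heS : e ∉ S := notMem_erase e _
  have hfS : f ∉ insert e S := by simp [S, hef.symm]
  have hSE : S ⊆ M.E := (erase_subset _ _).trans (erase_subset _ _)
  have hEf : M.E.erase f = insert e S := (insert_erase (mem_erase.mpr ⟨hef, he⟩)).symm
  have hE : M.E = insert f (insert e S) := by rw [← hEf, insert_erase hf]
  simp only [multivariateTutte, delete_E, delete_r]
  rw [hEf, hE, sum_powerset_insert hfS, sum_powerset_insert heS, sum_powerset_insert heS,
    sum_powerset_insert heS]
  simp only [← sum_add_distrib]
  refine sum_congr rfl fun A hA => ?_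
  have hAS : A ⊆ S := mem_powerset.mp hA
  have heA : e ∉ A := fun h => heS (hAS h)
  have hfeA : f ∉ insert e A := fun h => hfS (insert_subset_insert e hAS h)
  have hfA : f ∉ A := fun h => hfeA (mem_insert_of_mem h)
  have hfe : M.r (insert f (insert e A)) = M.r (insert e A) :=
    M.rank_insert_eq_of_rank_pair_eq (insert_subset he (hAS.trans hSE)) (mem_insert_self e A) hf hpe
  have hf' : M.r (insert f A) = M.r (insert e A) := by
    rw [← M.rank_insert_eq_of_rank_pair_eq (insert_subset hf (hAS.trans hSE))
      (mem_insert_self f A) he (by rw [pair_comm, hpf]), insert_comm, hfe]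
  simp only [prod_insert heA, prod_insert hfA, prod_insert hfeA, prod_update_of_notMem heA,
    Function.update_self, hfe, hf']
  ring

lemma neg_one_pow_rank_mul_multivariateTutte_pos_of_minors {q : ℚ} (hq : 0 < q) {e : α}
    (he : e ∈ M.E) (h1 : M.r {e} = 1) {v : α → ℚ} (hve : q + v e < 0)
    (hdel : 0 < (-1 : ℚ) ^ (M.delete e).r (M.delete e).E * (M.delete e).multivariateTutte q v)
    (hcon : 0 < (-1 : ℚ) ^ (M.contract he).r (M.contract he).E *
      (M.contract he).multivariateTutte q v) :
    0 < (-1 : ℚ) ^ M.r M.E * M.multivariateTutte q v := by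
  have hrank : M.r M.E = (M.contract he).r (M.contract he).E + 1 := by
    have := M.rank_mono {e} M.E (singleton_subset_iff.mpr he) subset_rfl
    rw [rank_contract_ground]
    omega
  rw [M.multivariateTutte_delete_contract he h1 hq.ne', hrank, pow_succ]
  by_cases hco : M.r (M.E.erase e) < M.r M.E
  · rw [M.multivariateTutte_delete_eq_contract_of_coloop he hco]
    have hfactor : 0 < -(q + v e) / q := div_pos (by linarith) hq
    refine lt_of_lt_of_eq (mul_pos hfactor hcon) ?_
    field_simp
  · have hdel_rank : (M.delete e).r (M.delete e).E = (M.contract he).r (M.contract he).E + 1 := by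
      have := M.rank_mono _ _ (erase_subset e M.E) subset_rfl
      simp only [delete_r, delete_E]
      omega
    rw [hdel_rank, pow_succ] at hdel
    have hfactor : 0 < -v e / q := div_pos (by linarith) hq
    refine lt_of_lt_of_eq (add_pos hdel (mul_pos hfactor hcon)) ?_
    field_simp
    ring

theorem neg_one_pow_rank_mul_multivariateTutte_pos {q : ℚ} {P : ℚ → Prop} (hq : 0 < q)
    (hP : ∀ a, P a → q + a < 0) (hPmerge : ∀ a b, P a → P b → P (a + b + a * b))
    (hM : ∀ e ∈ M.E, ¬ M.IsLoop e) (v : α → ℚ) (hv : ∀ e ∈ M.E, P (v e)) :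
    0 < (-1 : ℚ) ^ M.r M.E * M.multivariateTutte q v := by
  obtain ⟨n, hn⟩ : ∃ n, M.E.card = n := ⟨_, rfl⟩
  induction n generalizing M v with
  | zero =>
    simp [card_eq_zero.mp hn, multivariateTutte, rank_empty]
  | succ n ih =>
    obtain ⟨e, he⟩ : M.E.Nonempty := card_pos.mp (by omega)
    have hcard : (M.E.erase e).card = n := by rw [card_erase_of_mem he, hn, Nat.add_sub_cancel]
    by_cases hcon : ∀ g ∈ (M.contract he).E, ¬ (M.contract he).IsLoop g
    · exact M.neg_one_pow_rank_mul_multivariateTutte_pos_of_minors hq he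
        (M.rank_singleton_eq_one he (hM e he)) (hP _ (hv e he))
        (ih _ (M.loopless_delete hM e) v (fun g hg => hv g (mem_of_mem_erase hg)) hcard)
        (ih _ hcon v (fun g hg => hv g (mem_of_mem_erase hg)) hcard)
    · push Not at hcon
      obtain ⟨f, -, hloop⟩ := hcon
      obtain ⟨hfe, hpe⟩ := (M.isLoop_contract_iff he).mp hloop
      have hf := mem_of_mem_erase hfe
      have hef : e ≠ f := (ne_of_mem_erase hfe).symm
      have hpf : M.r {e, f} = M.r {f} := by
        rw [hpe, M.rank_singleton_eq_one he (hM e he), M.rank_singleton_eq_one hf (hM f hf)]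
      rw [M.multivariateTutte_merge_parallel he hf hef hpe hpf,
        ← M.rank_erase_eq_of_rank_pair_eq (mem_erase.mpr ⟨hef, he⟩) hf hpe]
      refine ih _ (M.loopless_delete hM f) _ (fun g hg => ?_) (by
        rw [delete_E, card_erase_of_mem hf, hn, Nat.add_sub_cancel])
      rcases eq_or_ne g e with rfl | hge
      · simpa using hPmerge _ _ (hv g he) (hv f hf)
      · simpa [hge] using hv g (mem_of_mem_erase hg)

end RankMatroid

theorem matroid_tutte_sign_regionL_general {α : Type} [DecidableEq α] (x y : ℚ)
    (hx1 : x < 1) (hyx : -x < y) (hy0 : y < 0)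
    (M : RankMatroid α) (hloopless : ∀ e ∈ M.E, ¬ M.IsLoop e) :
    0 < (-1 : ℚ) ^ M.r M.E * Ztc M ((x - 1) * (y - 1)) (y - 1) := by
  rw [M.Ztc_eq_multivariateTutte]
  refine M.neg_one_pow_rank_mul_multivariateTutte_pos (P := fun a => 1 + a ∈ Set.Icc y (y ^ 2))
    (by nlinarith) (fun a ha => ?_) (fun a b ha hb => ?_) hloopless _ (fun _ _ => ?_)
  · -- `q + a ≤ q + y² - 1 = (x + y)(y - 1) < 0`
    nlinarith [ha.2]
  · have := mul_mem_Icc_sq_of_mem_Icc_sq (by linarith) hy0.le ha hb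
    simpa only [show (1 + a) * (1 + b) = 1 + (a + b + a * b) by ring] using this
  · exact ⟨by linarith, by nlinarith⟩

/-- for rationals `0 < x < 1`, `-x < y < 0`, with `q = (x-1)(y-1)` and
`γ = y - 1`, every loopless matroid `M` on a finite ground set `E` satisfies
`(-1)^{r(E)}·Z̃(M;q,γ) > 0`. -/
theorem matroid_tutte_sign_regionL {α : Type} [DecidableEq α] (x y : ℚ)
    (hx0 : 0 < x) (hx1 : x < 1) (hyx : -x < y) (hy0 : y < 0)
    (M : RankMatroid α) (hloopless : ∀ e ∈ M.E, ¬ M.IsLoop e) :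
    0 < (-1 : ℚ) ^ M.r M.E * Ztc M ((x - 1) * (y - 1)) (y - 1) :=
  matroid_tutte_sign_regionL_general x y hx1 hyx hy0 M hloopless
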